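/- arXiv:1012.4754 — 2 statements merged into one kernel-verified Lean document; each statement's English description precedes it below -/
import Mathlib

section
/- For every real λ ≠ 0 and every real t, sinh(λt)·sinh(λ(t-1)) − λ·t·(t-1)·sinh(λ) ≥ 0. -/
/-!
With `u = 2t - 1` we have `2 sinh(λt) sinh(λ(t-1)) = cosh(uλ) - cosh λ` and `4t(t-1) = u² - 1`,
so the inequality says that `φ(u) = cosh(uλ) - (λ sinh λ / 2) u²` is minimal at `u = 1`. As `φ` is
even in both `u` and `λ`, we may take `λ, u ≥ 0`. Then `φ'(u) = λ (sinh(uλ) - u sinh λ)`, and since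
`sinh` is convex on `[0, ∞)` and vanishes at `0`, this is `≤ 0` for `u ≤ 1` and `≥ 0` for `u ≥ 1`.
-/

open Real Set

lemma convexOn_sinh : ConvexOn ℝ (Ici 0) sinh := by
  refine MonotoneOn.convexOn_of_deriv (convex_Ici 0) continuous_sinh.continuousOn
    differentiable_sinh.differentiableOn ?_
  rw [Real.deriv_sinh, interior_Ici]
  intro x hx y hy hxy
  exact cosh_le_cosh.2 (by rwa [abs_of_pos hx, abs_of_pos hy])

lemma sinh_mul_le_mul_sinh {a u : ℝ} (ha : 0 ≤ a) (hu₀ : 0 ≤ u) (hu₁ : u ≤ 1) :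
    sinh (u * a) ≤ u * sinh a := by
  simpa using convexOn_sinh.2 (mem_Ici.2 le_rfl) (mem_Ici.2 ha) (sub_nonneg.2 hu₁) hu₀ (by ring)

lemma mul_sinh_le_sinh_mul {a u : ℝ} (ha : 0 ≤ a) (hu : 1 ≤ u) :
    u * sinh a ≤ sinh (u * a) := by
  have hu₀ : 0 < u := one_pos.trans_le hu
  have h := sinh_mul_le_mul_sinh (mul_nonneg hu₀.le ha) (inv_nonneg.2 hu₀.le)
    (inv_le_one_of_one_le₀ hu)
  rw [inv_mul_cancel_left₀ hu₀.ne'] at h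
  calc u * sinh a ≤ u * (u⁻¹ * sinh (u * a)) := mul_le_mul_of_nonneg_left h hu₀.le
    _ = sinh (u * a) := mul_inv_cancel_left₀ hu₀.ne' _

lemma cosh_add_le_cosh_mul_of_nonneg {a u : ℝ} (ha : 0 ≤ a) (hu : 0 ≤ u) :
    cosh a + a * sinh a / 2 * (u ^ 2 - 1) ≤ cosh (u * a) := by
  set φ : ℝ → ℝ := fun x ↦ cosh (x * a) - a * sinh a / 2 * x ^ 2
  have hφ : ∀ x, HasDerivAt φ (a * (sinh (x * a) - x * sinh a)) x := fun x ↦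
    ((hasDerivAt_mul_const a).cosh.sub
      ((hasDerivAt_pow 2 x).const_mul (a * sinh a / 2))).congr_deriv (by push_cast; ring)
  have hφd : Differentiable ℝ φ := fun x ↦ (hφ x).differentiableAt
  have hφ_anti : AntitoneOn φ (Icc 0 1) := by
    refine antitoneOn_of_deriv_nonpos (convex_Icc 0 1) hφd.continuous.continuousOn
      hφd.differentiableOn fun x hx ↦ ?_
    rw [interior_Icc] at hx
    rw [(hφ x).deriv]
    exact mul_nonpos_of_nonneg_of_nonpos ha (sub_nonpos.2 (sinh_mul_le_mul_sinh ha hx.1.le hx.2.le))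
  have hφ_mono : MonotoneOn φ (Ici 1) := by
    refine monotoneOn_of_deriv_nonneg (convex_Ici 1) hφd.continuous.continuousOn
      hφd.differentiableOn fun x hx ↦ ?_
    rw [interior_Ici] at hx
    rw [(hφ x).deriv]
    exact mul_nonneg ha (sub_nonneg.2 (mul_sinh_le_sinh_mul ha hx.le))
  have h : φ 1 ≤ φ u := by
    rcases le_total u 1 with hu₁ | hu₁
    · exact hφ_anti ⟨hu, hu₁⟩ ⟨zero_le_one, le_rfl⟩ hu₁
    · exact hφ_mono (mem_Ici.2 le_rfl) hu₁ hu₁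
  simp only [φ, one_mul, one_pow] at h
  linarith

lemma mul_sinh_nonneg (a : ℝ) : 0 ≤ a * sinh a := by
  rcases le_total 0 a with ha | ha
  · exact mul_nonneg ha (sinh_nonneg_iff.2 ha)
  · exact mul_nonneg_of_nonpos_of_nonpos ha (sinh_nonpos_iff.2 ha)

lemma cosh_add_le_cosh_mul (a u : ℝ) :
    cosh a + a * sinh a / 2 * (u ^ 2 - 1) ≤ cosh (u * a) := by
  have h := cosh_add_le_cosh_mul_of_nonneg (abs_nonneg a) (abs_nonneg u)
  rwa [cosh_abs, ← abs_sinh, ← abs_mul, abs_of_nonneg (mul_sinh_nonneg a), sq_abs, ← abs_mul,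
    cosh_abs] at h

lemma two_mul_sinh_mul_sinh (x y : ℝ) : 2 * sinh x * sinh y = cosh (x + y) - cosh (x - y) := by
  rw [cosh_add, cosh_sub]
  ring

theorem stmt_15_general (lam t : ℝ) :
    0 ≤ Real.sinh (lam * t) * Real.sinh (lam * (t - 1)) - lam * t * (t - 1) * Real.sinh lam := by
  have hprod := two_mul_sinh_mul_sinh (lam * t) (lam * (t - 1))
  rw [show lam * t + lam * (t - 1) = (2 * t - 1) * lam by ring,
    show lam * t - lam * (t - 1) = lam by ring] at hprod
  have h := cosh_add_le_cosh_mul lam (2 * t - 1)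
  linarith

theorem stmt_15 (lam t : ℝ) (hlam : lam ≠ 0) :
    0 ≤ Real.sinh (lam * t) * Real.sinh (lam * (t - 1)) - lam * t * (t - 1) * Real.sinh lam :=
  stmt_15_general lam t
end

section
/- For t ≥ 1/2 (t ≠ 1) and strictly positive reals λ₁,…,λₙ, the matrix T with entries T_ij = (t/(t-1)) · (λ_i^{t-1} − λ_j^{t-1})/(λ_i^t − λ_j^t) (diagonal entries by continuity) is positive semidefinite. -/
/-!
For `0 < p < 1`, Mathlib's integral representation
`x ^ p = C⁻¹ * ∫ t in Ioi 0, t ^ p * (t⁻¹ - (t + x)⁻¹)` turns the divided differences of `x ^ p`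
into `C⁻¹ * ∫ t in Ioi 0, t ^ p / ((t + x) * (t + y))`, a superposition of rank-one kernels
`(t + x)⁻¹ (t + y)⁻¹`; hence the Löwner matrix of `x ^ p` is positive semidefinite (for `p = 1` it
is the all-ones matrix). Substituting `u = λ ^ t`, the matrix `T` is `1 / p` times the Löwner
matrix of `u ^ p` with `p = (t - 1) / t` when `t > 1`; when `1/2 ≤ t < 1` it is `1 / p` times
that Löwner matrix with `p = (1 - t) / t` conjugated by `diag (λ ^ (t - 1)) = diag (u ^ (-p))`.
-/

open MeasureTheory Set Filter Topology Matrix Real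

theorem Matrix.posSemidef_of_integral_mul {ι α : Type*} [Fintype ι] [MeasurableSpace α]
    {μ : Measure α} {g : α → ℝ} (hg : 0 ≤ᵐ[μ] g) (f : ι → α → ℝ)
    (hf : ∀ i j, Integrable (fun a ↦ g a * (f i a * f j a)) μ) :
    (of fun i j ↦ ∫ a, g a * (f i a * f j a) ∂μ).PosSemidef := by
  refine PosSemidef.of_dotProduct_mulVec_nonneg ?_ fun v ↦ ?_
  · ext i j
    simp only [conjTranspose_apply, of_apply, star_trivial, mul_comm (f i _)]
  · have hsq : star v ⬝ᵥ ((of fun i j ↦ ∫ a, g a * (f i a * f j a) ∂μ) *ᵥ v) =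
        ∫ a, g a * (∑ i, v i * f i a) ^ 2 ∂μ := calc
      _ = ∑ i, ∑ j, ∫ a, v i * v j * (g a * (f i a * f j a)) ∂μ := by
        simp only [dotProduct, mulVec, of_apply, star_trivial, Finset.mul_sum,
          integral_const_mul]
        refine Finset.sum_congr rfl fun i _ ↦ Finset.sum_congr rfl fun j _ ↦ ?_
        ring
      _ = ∫ a, ∑ i, ∑ j, v i * v j * (g a * (f i a * f j a)) ∂μ := by
        rw [integral_finsetSum _ fun i _ ↦ integrable_finsetSum _ fun j _ ↦
          (hf i j).const_mul (v i * v j)]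
        exact Finset.sum_congr rfl fun i _ ↦
          (integral_finsetSum _ fun j _ ↦ (hf i j).const_mul (v i * v j)).symm
      _ = ∫ a, g a * (∑ i, v i * f i a) ^ 2 ∂μ := by
        congr 1 with a
        rw [sq, Finset.sum_mul_sum, Finset.mul_sum]
        refine Finset.sum_congr rfl fun i _ ↦ ?_
        rw [Finset.mul_sum]
        refine Finset.sum_congr rfl fun j _ ↦ ?_
        ring
    rw [hsq]
    exact integral_nonneg_of_ae <| hg.mono fun a ha ↦ mul_nonneg ha (sq_nonneg _)

namespace Real

variable {p x y : ℝ}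

lemma rpowIntegrand₀₁_sub_rpowIntegrand₀₁ {t : ℝ} (ht : 0 < t) (hx : 0 ≤ x) (hy : 0 ≤ y) :
    rpowIntegrand₀₁ p t x - rpowIntegrand₀₁ p t y =
      (x - y) * (t ^ p * ((t + x)⁻¹ * (t + y)⁻¹)) := by
  have : t + x ≠ 0 := by positivity
  have : t + y ≠ 0 := by positivity
  unfold rpowIntegrand₀₁
  field_simp
  ring

lemma integrableOn_rpow_mul_inv_mul_inv (hp : p ∈ Ioo 0 1) (hx : 0 < x) (hy : 0 ≤ y) :
    IntegrableOn (fun t ↦ t ^ p * ((t + x)⁻¹ * (t + y)⁻¹)) (Ioi 0) := by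
  refine Integrable.mono' ((integrableOn_rpowIntegrand₀₁_Ioi hp hx.le).div_const x) ?_ ?_
  · refine ContinuousOn.aestronglyMeasurable (fun t ht ↦ ?_) measurableSet_Ioi
    have ht : 0 < t := ht
    have : t + x ≠ 0 := by positivity
    have : t + y ≠ 0 := by positivity
    have hc : ContinuousAt (fun t ↦ t ^ p * ((t + x)⁻¹ * (t + y)⁻¹)) t := by
      fun_prop (disch := simp [*, ht.ne'])
    exact hc.continuousWithinAt
  · refine ae_restrict_of_forall_mem measurableSet_Ioi fun t (ht : 0 < t) ↦ ?_
    rw [rpowIntegrand₀₁_eq_pow_div hp ht.le hx.le, norm_of_nonneg (by positivity),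
      rpow_sub_one ht.ne']
    calc t ^ p * ((t + x)⁻¹ * (t + y)⁻¹) ≤ t ^ p * ((t + x)⁻¹ * t⁻¹) := by
          gcongr; linarith
      _ = t ^ p / t * x / (t + x) / x := by field_simp

lemma rpow_sub_rpow_eq_mul_integral (hp : p ∈ Ioo 0 1) (hx : 0 < x) (hy : 0 < y) :
    x ^ p - y ^ p = (x - y) * ((∫ t in Ioi 0, rpowIntegrand₀₁ p t 1)⁻¹ *
      ∫ t in Ioi 0, t ^ p * ((t + x)⁻¹ * (t + y)⁻¹)) := by
  rw [rpow_eq_const_mul_integral hp hx.le, rpow_eq_const_mul_integral hp hy.le, ← mul_sub,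
    ← integral_sub (integrableOn_rpowIntegrand₀₁_Ioi hp hx.le)
      (integrableOn_rpowIntegrand₀₁_Ioi hp hy.le),
    setIntegral_congr_fun measurableSet_Ioi fun t (ht : 0 < t) ↦
      rpowIntegrand₀₁_sub_rpowIntegrand₀₁ ht hx.le hy.le,
    integral_const_mul]
  ring

lemma tendsto_rpow_mul_inv_add_atTop (hp : p < 1) (hx : 0 ≤ x) :
    Tendsto (fun t ↦ t ^ p * (t + x)⁻¹) atTop (𝓝 0) := by
  have hlim : Tendsto (fun t : ℝ ↦ t ^ (p - 1)) atTop (𝓝 0) := by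
    simpa using tendsto_rpow_neg_atTop (y := 1 - p) (by linarith)
  refine squeeze_zero' ?_ ?_ hlim
  · filter_upwards [eventually_ge_atTop 0] with t ht
    positivity
  · filter_upwards [eventually_gt_atTop 0] with t ht
    rw [rpow_sub_one ht.ne', div_eq_mul_inv]
    gcongr
    linarith

/-- Integration by parts against `-t ^ p / (t + x)` reduces this to the integral representation
of `x ^ p`. -/
lemma integral_rpow_mul_inv_mul_inv_self (hp : p ∈ Ioo 0 1) (hx : 0 < x) :
    ∫ t in Ioi 0, t ^ p * ((t + x)⁻¹ * (t + x)⁻¹) =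
      p * (∫ t in Ioi 0, rpowIntegrand₀₁ p t 1) * x ^ (p - 1) := by
  have hderiv : ∀ t ∈ Ioi (0 : ℝ), HasDerivAt (fun t ↦ -(t ^ p * (t + x)⁻¹))
      (t ^ p * ((t + x)⁻¹ * (t + x)⁻¹) - p / x * rpowIntegrand₀₁ p t x) t := by
    intro t (ht : 0 < t)
    have htx : t + x ≠ 0 := by positivity
    refine (((hasDerivAt_rpow_const (.inl ht.ne')).fun_mul
      (((hasDerivAt_id' t).add_const x).fun_inv htx)).fun_neg).congr_deriv ?_
    rw [rpowIntegrand₀₁_eq_pow_div hp ht.le hx.le, rpow_sub_one ht.ne']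
    field_simp
    ring
  have hint := (integrableOn_rpow_mul_inv_mul_inv hp hx hx.le).sub
    ((integrableOn_rpowIntegrand₀₁_Ioi hp hx.le).const_mul (p / x))
  have hcont : ContinuousWithinAt (fun t ↦ -(t ^ p * (t + x)⁻¹)) (Ici 0) 0 := by
    have : (0 : ℝ) + x ≠ 0 := by simp [hx.ne']
    exact ContinuousAt.continuousWithinAt (by fun_prop (disch := simp [*, hp.1.le]))
  have hftc := integral_Ioi_of_hasDerivAt_of_tendsto hcont hderiv hint
    (by simpa using (tendsto_rpow_mul_inv_add_atTop hp.2 hx.le).neg)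
  rw [integral_sub (integrableOn_rpow_mul_inv_mul_inv hp hx hx.le)
    ((integrableOn_rpowIntegrand₀₁_Ioi hp hx.le).const_mul (p / x)), integral_const_mul,
    integral_rpowIntegrand₀₁_eq_rpow_mul_const hp hx.le, zero_rpow hp.1.ne'] at hftc
  rw [rpow_sub_one hx.ne']
  linear_combination hftc

end Real

section Loewner

variable {ι : Type*}

noncomputable def loewnerMatrix (f f' : ℝ → ℝ) (x : ι → ℝ) : Matrix ι ι ℝ :=
  of fun i j ↦ if x i = x j then f' (x i) else (f (x i) - f (x j)) / (x i - x j)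

variable {p : ℝ} {x : ι → ℝ}

theorem loewnerMatrix_rpow_eq_smul_integral (hp : p ∈ Ioo 0 1) (hx : ∀ i, 0 < x i) :
    loewnerMatrix (· ^ p) (fun y ↦ p * y ^ (p - 1)) x =
      (∫ t in Ioi 0, rpowIntegrand₀₁ p t 1)⁻¹ •
        of fun i j ↦ ∫ t in Ioi 0, t ^ p * ((t + x i)⁻¹ * (t + x j)⁻¹) := by
  have hC := (integral_rpowIntegrand₀₁_one_pos hp).ne'
  ext i j
  simp only [loewnerMatrix, of_apply, Matrix.smul_apply, smul_eq_mul]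
  split_ifs with h
  · rw [← h, integral_rpow_mul_inv_mul_inv_self hp (hx i)]
    field_simp
  · rw [rpow_sub_rpow_eq_mul_integral hp (hx i) (hx j),
      mul_div_cancel_left₀ _ (sub_ne_zero.2 h)]

variable [Fintype ι]

theorem posSemidef_loewnerMatrix_rpow (hp : p ∈ Ioc 0 1) (hx : ∀ i, 0 < x i) :
    (loewnerMatrix (· ^ p) (fun y ↦ p * y ^ (p - 1)) x).PosSemidef := by
  rcases hp.2.lt_or_eq with hp1 | rfl
  · rw [loewnerMatrix_rpow_eq_smul_integral ⟨hp.1, hp1⟩ hx]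
    refine .smul ?_ (inv_nonneg.2 (integral_rpowIntegrand₀₁_one_pos ⟨hp.1, hp1⟩).le)
    exact posSemidef_of_integral_mul
      (ae_restrict_of_forall_mem measurableSet_Ioi fun t (ht : 0 < t) ↦ rpow_nonneg ht.le p)
      (fun i t ↦ (t + x i)⁻¹)
      fun i j ↦ integrableOn_rpow_mul_inv_mul_inv ⟨hp.1, hp1⟩ (hx i) (hx j).le
  · have hones : loewnerMatrix (· ^ (1 : ℝ)) (fun y ↦ 1 * y ^ ((1 : ℝ) - 1)) x =
        vecMulVec 1 (star 1) := by
      ext i j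
      simp only [loewnerMatrix, of_apply, vecMulVec_apply, rpow_one, sub_self, rpow_zero]
      split_ifs with h
      · simp
      · simp [div_self (sub_ne_zero.2 h)]
    rw [hones]
    exact posSemidef_vecMulVec_self_star 1

end Loewner

section PowerDifferenceMean

variable {ι : Type*} {t : ℝ} {lam : ι → ℝ}

noncomputable def invPowerDifferenceMeanMatrix (t : ℝ) (lam : ι → ℝ) : Matrix ι ι ℝ :=
  of fun i j ↦ if lam i = lam j then 1 / lam i
    else t / (t - 1) * (lam i ^ (t - 1) - lam j ^ (t - 1)) / (lam i ^ t - lam j ^ t)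

theorem invPowerDifferenceMeanMatrix_eq_of_one_lt (ht : 1 < t) (hlam : ∀ i, 0 < lam i) :
    invPowerDifferenceMeanMatrix t lam = (t / (t - 1)) •
      loewnerMatrix (· ^ ((t - 1) / t)) (fun y ↦ (t - 1) / t * y ^ ((t - 1) / t - 1))
        (fun i ↦ lam i ^ t) := by
  have ht0 : t ≠ 0 := by positivity
  have ht1 : t - 1 ≠ 0 := by linarith
  ext i j
  simp only [invPowerDifferenceMeanMatrix, loewnerMatrix, of_apply, Matrix.smul_apply,
    smul_eq_mul, rpow_left_inj (hlam i).le (hlam j).le ht0, ← rpow_mul (hlam i).le,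
    ← rpow_mul (hlam j).le]
  split_ifs with h
  · rw [show t * ((t - 1) / t - 1) = -1 by field_simp; ring, rpow_neg_one]
    field_simp
  · rw [mul_div_cancel₀ _ ht0]
    ring

theorem invPowerDifferenceMeanMatrix_eq_of_lt_one (ht0 : 0 < t) (ht : t < 1)
    (hlam : ∀ i, 0 < lam i) [Fintype ι] [DecidableEq ι] :
    invPowerDifferenceMeanMatrix t lam = (t / (1 - t)) •
      (diagonal (fun i ↦ lam i ^ (t - 1)) *
        loewnerMatrix (· ^ ((1 - t) / t)) (fun y ↦ (1 - t) / t * y ^ ((1 - t) / t - 1))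
          (fun i ↦ lam i ^ t) *
        diagonal (fun i ↦ lam i ^ (t - 1))) := by
  have ht1 : 1 - t ≠ 0 := by linarith
  have ht1' : t - 1 ≠ 0 := by linarith
  ext i j
  simp only [invPowerDifferenceMeanMatrix, loewnerMatrix, of_apply, Matrix.smul_apply,
    smul_eq_mul, diagonal_mul, mul_diagonal, rpow_left_inj (hlam i).le (hlam j).le ht0.ne',
    ← rpow_mul (hlam i).le, ← rpow_mul (hlam j).le]
  split_ifs with h
  · rw [← h, show t * ((1 - t) / t - 1) = -(t - 1) + (-(t - 1) + -1) by field_simp; ring,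
      rpow_add (hlam i), rpow_add (hlam i), rpow_neg (hlam i).le, rpow_neg_one]
    have : lam i ^ (t - 1) ≠ 0 := (rpow_pos_of_pos (hlam i) _).ne'
    field_simp
  · have hD : lam i ^ t - lam j ^ t ≠ 0 :=
      sub_ne_zero.2 fun e ↦ h ((rpow_left_inj (hlam i).le (hlam j).le ht0.ne').1 e)
    rw [show t * ((1 - t) / t) = -(t - 1) by field_simp; ring, rpow_neg (hlam i).le,
      rpow_neg (hlam j).le]
    have : lam i ^ (t - 1) ≠ 0 := (rpow_pos_of_pos (hlam i) _).ne'
    have : lam j ^ (t - 1) ≠ 0 := (rpow_pos_of_pos (hlam j) _).ne'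
    field_simp
    ring

end PowerDifferenceMean

theorem stmt_16 (t : ℝ) (ht : 1 / 2 ≤ t) (ht1 : t ≠ 1)
    (n : ℕ) (lam : Fin n → ℝ) (hlam : ∀ i, 0 < lam i) :
    Matrix.PosSemidef (Matrix.of fun i j : Fin n =>
      if lam i = lam j then 1 / lam i
      else (t / (t - 1)) * (lam i ^ (t - 1) - lam j ^ (t - 1)) / (lam i ^ t - lam j ^ t)) := by
  have ht0 : 0 < t := by linarith
  have hpow : ∀ i, 0 < lam i ^ t := fun i ↦ rpow_pos_of_pos (hlam i) t
  change (invPowerDifferenceMeanMatrix t lam).PosSemidef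
  rcases ht1.lt_or_gt with hlt | hgt
  · have hp : (1 - t) / t ∈ Ioc 0 1 :=
      ⟨div_pos (by linarith) ht0, (div_le_one ht0).2 (by linarith)⟩
    rw [invPowerDifferenceMeanMatrix_eq_of_lt_one ht0 hlt hlam]
    refine .smul ?_ (div_nonneg ht0.le (by linarith))
    simpa using (posSemidef_loewnerMatrix_rpow hp hpow).conjTranspose_mul_mul_same
      (diagonal fun i ↦ lam i ^ (t - 1))
  · have hp : (t - 1) / t ∈ Ioc 0 1 :=
      ⟨div_pos (by linarith) ht0, (div_le_one ht0).2 (by linarith)⟩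
    rw [invPowerDifferenceMeanMatrix_eq_of_one_lt hgt hlam]
    exact (posSemidef_loewnerMatrix_rpow hp hpow).smul (div_nonneg ht0.le (by linarith))
end
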